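/- Let F > 0 and 0 < H_R < 1 with √H_R + H_R > F, and set ν := 1/√H_R, H₃ := ν² H_R/(ν+1)², H_s := (F ν²/(ν+1))^{2/3} H_R. Then for every H with H_R < H < 1 one has H > H_s, the denominator (H−H_s)(H²+HH_s+H_s²) is strictly positive, and F²(H−1)(H−H_R)(H−H₃)/((H−H_s)(H²+HH_s+H_s²)) < 0. In particular smooth hydraulic shock profiles are strictly decreasing. -/

import Mathlib

open Real

/-- `ν := 1/√H_R`. -/
noncomputable def nuOf (HR : ℝ) : ℝ := 1 / Real.sqrt HR

/-- `H₃ := ν² H_R/(ν+1)²`. -/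
noncomputable def H3 (HR : ℝ) : ℝ := nuOf HR ^ 2 * HR / (nuOf HR + 1) ^ 2

/-- `H_s := (F ν²/(ν+1))^{2/3} H_R`. -/
noncomputable def Hs (F HR : ℝ) : ℝ := (F * nuOf HR ^ 2 / (nuOf HR + 1)) ^ ((2 : ℝ) / 3) * HR

/-! Substituting `ν = 1/√H_R` gives `H₃ = H_R/(1+√H_R)²` and `H_s = (F/(√H_R+H_R))^{2/3} H_R`;
both factors are `< 1` (the second exactly by the existence condition `√H_R + H_R > F`), so
`H₃, H_s < H_R < H`. The denominator is `H³ - H_s³ > 0` and the numerator has exactly one negative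
factor, `H - 1`. -/

theorem H3_eq {HR : ℝ} (h0 : 0 < HR) : H3 HR = HR / (1 + √HR) ^ 2 := by
  have hs : 0 < √HR := Real.sqrt_pos.2 h0
  rw [H3, nuOf, ← Real.sq_sqrt h0.le]
  field_simp

theorem H3_lt_self {HR : ℝ} (h0 : 0 < HR) : H3 HR < HR := by
  have hs : 0 < √HR := Real.sqrt_pos.2 h0
  rw [H3_eq h0, div_lt_iff₀ (by positivity)]
  nlinarith [mul_pos h0 hs]

theorem Hs_eq (F : ℝ) {HR : ℝ} (h0 : 0 < HR) :
    Hs F HR = (F / (√HR + HR)) ^ ((2 : ℝ) / 3) * HR := by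
  have hs : 0 < √HR := Real.sqrt_pos.2 h0
  have hbase : F * nuOf HR ^ 2 / (nuOf HR + 1) = F / (√HR + HR) := by
    rw [nuOf]
    field_simp
    linear_combination -F * Real.sq_sqrt h0.le
  rw [Hs, hbase]

theorem Hs_lt_self {F HR : ℝ} (hF : 0 ≤ F) (h0 : 0 < HR) (hdom : F < √HR + HR) :
    Hs F HR < HR := by
  have hpos : 0 < √HR + HR := by positivity
  rw [Hs_eq F h0]
  refine mul_lt_of_lt_one_left h0 (Real.rpow_lt_one (div_nonneg hF hpos.le) ?_ (by norm_num))
  exact (div_lt_one hpos).2 hdom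

theorem sub_mul_sq_add_mul_add_sq_pos {a b : ℝ} (hab : b < a) :
    0 < (a - b) * (a ^ 2 + a * b + b ^ 2) := by
  have hcube : b ^ 3 < a ^ 3 := Odd.strictMono_pow (by decide) hab
  linear_combination hcube

theorem profile_vector_field_neg (F HR : ℝ) (hF : 0 < F) (h0 : 0 < HR)
    (hdom : Real.sqrt HR + HR > F) :
    ∀ H : ℝ, HR < H → H < 1 →
      Hs F HR < H ∧
      0 < (H - Hs F HR) * (H ^ 2 + H * Hs F HR + Hs F HR ^ 2) ∧
      F ^ 2 * (H - 1) * (H - HR) * (H - H3 HR) /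
        ((H - Hs F HR) * (H ^ 2 + H * Hs F HR + Hs F HR ^ 2)) < 0 := by
  intro H hHR hH1
  have hHs : Hs F HR < H := (Hs_lt_self hF.le h0 hdom).trans hHR
  have hden := sub_mul_sq_add_mul_add_sq_pos hHs
  have hH3 : H3 HR < H := (H3_lt_self h0).trans hHR
  have hnum : F ^ 2 * (H - 1) * (H - HR) * (H - H3 HR) < 0 :=
    mul_neg_of_neg_of_pos
      (mul_neg_of_neg_of_pos (mul_neg_of_pos_of_neg (pow_pos hF 2) (by linarith)) (by linarith))
      (by linarith)
  exact ⟨hHs, hden, div_neg_of_neg_of_pos hnum hden⟩
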